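/- arXiv:alg-geom/9605001 — 2 statements merged into one kernel-verified Lean document; each statement's English description precedes it below -/
import Mathlib

section
/- Every nonzero finitely generated O'-submodule a of K is principal; more precisely, a = uⁱ·tⁿ·O' for uniquely determined integers i, n ∈ ℤ. -/
set_option synthInstance.maxHeartbeats 1000000
set_option maxHeartbeats 1000000

noncomputable section

open HahnSeries

namespace TwoDimLocal

variable (k : Type) [Field k]

/-- `k((u))`, the field of Laurent series over `k`. -/
abbrev K1 := LaurentSeries k

/-- `K = k((u))((t))`, the two-dimensional local field of iterated Laurent series. -/
abbrev K := LaurentSeries (LaurentSeries k)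

section Nonneg

variable (F : Type) [Field F]

lemma order_nonneg_of_support {x : LaurentSeries F} (hx : x ≠ 0)
    (h : ∀ n : ℤ, n < 0 → x.coeff n = 0) : 0 ≤ x.order := by
  by_contra hlt
  push_neg at hlt
  exact hx (coeff_order_eq_zero.1 (h x.order hlt))

/-- The subring `F[[X]] ⊆ F((X))` of power series, described by vanishing of the
coefficients of negative index. -/
def nonneg : Subring (LaurentSeries F) where
  carrier := {x | ∀ n : ℤ, n < 0 → x.coeff n = 0}
  zero_mem' := by intro n _; simp
  one_mem' := by
    intro n hn
    rw [HahnSeries.coeff_one, if_neg (by omega)]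
  add_mem' := by
    intro a b ha hb n hn
    rw [HahnSeries.coeff_add, ha n hn, hb n hn, add_zero]
  neg_mem' := by
    intro a ha n hn
    rw [HahnSeries.coeff_neg, ha n hn, neg_zero]
  mul_mem' := by
    intro a b ha hb n hn
    by_contra hne
    obtain ⟨i, hi, j, hj, rfl⟩ := support_mul_subset ((mem_support _ _).2 hne)
    rw [mem_support] at hi hj
    have hi0 : 0 ≤ i := by by_contra h; push_neg at h; exact hi (ha i h)
    have hj0 : 0 ≤ j := by by_contra h; push_neg at h; exact hj (hb j h)
    exact absurd hn (not_lt.2 (add_nonneg hi0 hj0))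

lemma mem_nonneg_iff {x : LaurentSeries F} :
    x ∈ nonneg F ↔ ∀ n : ℤ, n < 0 → x.coeff n = 0 := Iff.rfl

lemma coeff_zero_mul {x y : LaurentSeries F} (hx : x ∈ nonneg F) (hy : y ∈ nonneg F) :
    (x * y).coeff 0 = x.coeff 0 * y.coeff 0 := by
  rcases eq_or_ne x 0 with rfl | hx0
  · simp
  rcases eq_or_ne y 0 with rfl | hy0
  · simp
  have hxo : 0 ≤ x.order := order_nonneg_of_support F hx0 hx
  have hyo : 0 ≤ y.order := order_nonneg_of_support F hy0 hy
  rcases lt_or_eq_of_le hxo with hxo' | hxo'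
  · have h1 : x.coeff 0 = 0 := HahnSeries.coeff_eq_zero_of_lt_order hxo'
    have h2 : (x * y).coeff 0 = 0 := by
      apply HahnSeries.coeff_eq_zero_of_lt_order
      rw [HahnSeries.order_mul_of_ne_zero (by simp [hx0, hy0])]
      omega
    rw [h1, h2, zero_mul]
  rcases lt_or_eq_of_le hyo with hyo' | hyo'
  · have h1 : y.coeff 0 = 0 := HahnSeries.coeff_eq_zero_of_lt_order hyo'
    have h2 : (x * y).coeff 0 = 0 := by
      apply HahnSeries.coeff_eq_zero_of_lt_order
      rw [HahnSeries.order_mul_of_ne_zero (by simp [hx0, hy0])]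
      omega
    rw [h1, h2, mul_zero]
  have := HahnSeries.coeff_mul_order_add_order x y
  rw [HahnSeries.leadingCoeff_eq, HahnSeries.leadingCoeff_eq, ← hxo', ← hyo'] at this
  simpa using this

end Nonneg

/-- The ring of integers `O_K = k((u))[[t]]` of `K` with respect to the `t`-adic valuation. -/
def OK : Subring (K k) := nonneg (K1 k)

/-- The rank-2 valuation subring `O' = p⁻¹(k[[u]]) ⊆ K`, consisting of those `t`-adic
integers whose constant `t`-coefficient is a power series in `u`. -/
def Oprime : Subring (K k) where
  carrier := {x | x ∈ OK k ∧ x.coeff 0 ∈ nonneg k}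
  zero_mem' := ⟨Subring.zero_mem _, by simp⟩
  one_mem' := ⟨Subring.one_mem _, by
    intro n hn
    rw [show ((1 : K k).coeff 0) = 1 from by rw [HahnSeries.coeff_one]; simp]
    rw [HahnSeries.coeff_one, if_neg (by omega)]⟩
  add_mem' := by
    rintro a b ⟨ha1, ha2⟩ ⟨hb1, hb2⟩
    refine ⟨Subring.add_mem _ ha1 hb1, ?_⟩
    rw [HahnSeries.coeff_add]
    exact Subring.add_mem _ ha2 hb2
  neg_mem' := by
    rintro a ⟨ha1, ha2⟩
    refine ⟨Subring.neg_mem _ ha1, ?_⟩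
    rw [HahnSeries.coeff_neg]
    exact Subring.neg_mem _ ha2
  mul_mem' := by
    rintro a b ⟨ha1, ha2⟩ ⟨hb1, hb2⟩
    refine ⟨Subring.mul_mem _ ha1 hb1, ?_⟩
    rw [coeff_zero_mul (K1 k) ha1 hb1]
    exact Subring.mul_mem _ ha2 hb2

lemma Oprime_le_OK : (Oprime k : Set (K k)) ⊆ (OK k : Set (K k)) := fun _ h => h.1

/-- The local parameter `t` of `K = k((u))((t))`. -/
def t : K k := HahnSeries.single (1 : ℤ) 1

/-- The local parameter `u` of `K = k((u))((t))`, i.e. the image in `K` of the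
local parameter of `k((u))`. -/
def u : K k := HahnSeries.C (HahnSeries.single (1 : ℤ) (1 : k))

/-- The maximal ideal `m = p⁻¹(u·k[[u]])` of `O'`, as a subset of `K`. -/
def mSet : Set (K k) := {x | x ∈ Oprime k ∧ (x.coeff 0).coeff 0 = 0}

/-- The rank-two valuation `ν' : K* → ℤ ×ₗ ℤ`: the first component is the `t`-adic order,
the second one the `u`-adic order of the leading `t`-coefficient. (Junk value at `0`.) -/
def nu (x : K k) : ℤ ×ₗ ℤ := toLex (x.order, (x.coeff x.order).order)

end TwoDimLocal

namespace TwoDimLocal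

/-! `ν'` is a valuation with values in `ℤ ×ₗ ℤ` whose valuation ring is `O'`, so for nonzero
`x, y` we have `x ∈ O'·y ↔ ν' y ≤ ν' x`. Hence the principal submodules of `K` are totally
ordered by inclusion, a finitely generated one is principal, and `O'·x = O'·y` exactly when
`ν' x = ν' y`; since `ν' (uⁱ tⁿ) = (n, i)`, this pins down `(i, n)`. -/

theorem _root_.Submodule.isPrincipal_of_fg_of_span_singleton_total {R M : Type*} [Semiring R]
    [AddCommMonoid M] [Module R M]
    (htot : ∀ x y : M, R ∙ x ≤ R ∙ y ∨ R ∙ y ≤ R ∙ x) {N : Submodule R M} (hN : N.FG) :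
    N.IsPrincipal := by
  induction N, hN using Submodule.fg_induction with
  | singleton x => exact ⟨x, rfl⟩
  | sup _ _ _ _ h₁ h₂ =>
    obtain ⟨⟨x, rfl⟩⟩ := h₁
    obtain ⟨⟨y, rfl⟩⟩ := h₂
    rcases htot x y with h | h
    · rw [sup_of_le_right h]; exact ⟨y, rfl⟩
    · rw [sup_of_le_left h]; exact ⟨x, rfl⟩

lemma mem_nonneg_iff_zero_le_order {F : Type} [Field F] {y : LaurentSeries F} :
    y ∈ nonneg F ↔ 0 ≤ y.order := by
  rcases eq_or_ne y 0 with rfl | hy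
  · simp [(nonneg F).zero_mem]
  exact ⟨order_nonneg_of_support F hy,
    fun h n hn => coeff_eq_zero_of_lt_order (hn.trans_le h)⟩

variable {k : Type} [Field k]

lemma nu_mul {x y : K k} (hx : x ≠ 0) (hy : y ≠ 0) : nu k (x * y) = nu k x + nu k y := by
  have hcx : x.leadingCoeff ≠ 0 := leadingCoeff_ne_zero.2 hx
  have hcy : y.leadingCoeff ≠ 0 := leadingCoeff_ne_zero.2 hy
  rw [nu, nu, nu, ← leadingCoeff_eq, ← leadingCoeff_eq, ← leadingCoeff_eq, leadingCoeff_mul,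
    order_mul hx hy, order_mul hcx hcy]
  rfl

lemma mem_Oprime_iff_zero_le_nu {x : K k} : x ∈ Oprime k ↔ 0 ≤ nu k x := by
  change x ∈ nonneg _ ∧ x.coeff 0 ∈ nonneg k ↔
    toLex (0, 0) ≤ toLex (x.order, (x.coeff x.order).order)
  rw [Prod.Lex.toLex_le_toLex, mem_nonneg_iff_zero_le_order, mem_nonneg_iff_zero_le_order]
  rcases lt_trichotomy 0 x.order with h | h | h
  · simp [h, h.le, coeff_eq_zero_of_lt_order h]
  · simp [← h]
  · simp [h.not_ge, h.ne', h.asymm]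

lemma mem_span_singleton_iff_nu_le {x y : K k} (hx : x ≠ 0) (hy : y ≠ 0) :
    x ∈ Oprime k ∙ y ↔ nu k y ≤ nu k x := by
  have hquot : nu k x = nu k (x / y) + nu k y := by
    rw [← nu_mul (div_ne_zero hx hy) hy, div_mul_cancel₀ x hy]
  rw [hquot, le_add_iff_nonneg_left, ← mem_Oprime_iff_zero_le_nu, Submodule.mem_span_singleton]
  constructor
  · rintro ⟨c, rfl⟩
    simp [Subring.smul_def, mul_div_cancel_right₀ _ hy]
  · exact fun h => ⟨⟨_, h⟩, div_mul_cancel₀ x hy⟩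

lemma span_singleton_eq_span_singleton_iff_nu_eq {x y : K k} (hx : x ≠ 0) (hy : y ≠ 0) :
    Oprime k ∙ x = Oprime k ∙ y ↔ nu k x = nu k y := by
  rw [le_antisymm_iff, le_antisymm_iff, Submodule.span_singleton_le_iff_mem,
    Submodule.span_singleton_le_iff_mem, mem_span_singleton_iff_nu_le hx hy,
    mem_span_singleton_iff_nu_le hy hx, and_comm]

lemma span_singleton_le_or_le (x y : K k) :
    Oprime k ∙ x ≤ Oprime k ∙ y ∨ Oprime k ∙ y ≤ Oprime k ∙ x := by
  rcases eq_or_ne x 0 with rfl | hx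
  · simp
  rcases eq_or_ne y 0 with rfl | hy
  · simp
  simp only [Submodule.span_singleton_le_iff_mem, mem_span_singleton_iff_nu_le, hx, hy, ne_eq,
    not_false_eq_true]
  exact le_total _ _

lemma u_zpow_mul_t_zpow (i n : ℤ) :
    u k ^ i * t k ^ n = single n (single i (1 : k)) := by
  rw [u, t, ← map_zpow₀ C, ← RatFunc.single_zpow, ← RatFunc.single_zpow, C_apply,
    single_mul_single, zero_add, mul_one]

lemma u_zpow_mul_t_zpow_ne_zero (i n : ℤ) : u k ^ i * t k ^ n ≠ 0 := by
  rw [u_zpow_mul_t_zpow]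
  exact single_ne_zero (single_ne_zero one_ne_zero)

lemma nu_u_zpow_mul_t_zpow (i n : ℤ) : nu k (u k ^ i * t k ^ n) = toLex (n, i) := by
  rw [u_zpow_mul_t_zpow, nu, order_single (single_ne_zero one_ne_zero), coeff_single_same,
    order_single one_ne_zero]

/-- Every nonzero finitely generated fractional `O'`-ideal
(`O'`-submodule of `K`) is principal, generated by `uⁱ·tⁿ` for uniquely
determined integers `i, n`. -/
theorem fg_fractional_ideal_principal (k : Type) [Field k]
    (a : Submodule (Oprime k) (K k)) (ha : a ≠ ⊥) (hfg : a.FG) :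
    ∃! p : ℤ × ℤ, a = Submodule.span (Oprime k) {u k ^ p.1 * t k ^ p.2} := by
  obtain ⟨x, rfl⟩ :=
    (Submodule.isPrincipal_of_fg_of_span_singleton_total span_singleton_le_or_le hfg).principal
  have hx : x ≠ 0 := by rintro rfl; exact ha (Submodule.span_singleton_eq_bot.2 rfl)
  refine ⟨((ofLex (nu k x)).2, (ofLex (nu k x)).1), ?_, ?_⟩
  · dsimp only
    rw [span_singleton_eq_span_singleton_iff_nu_eq hx (u_zpow_mul_t_zpow_ne_zero _ _),
      nu_u_zpow_mul_t_zpow]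
    rfl
  · rintro ⟨i, n⟩ h
    rw [span_singleton_eq_span_singleton_iff_nu_eq hx (u_zpow_mul_t_zpow_ne_zero _ _),
      nu_u_zpow_mul_t_zpow] at h
    rw [h]
    rfl

end TwoDimLocal
end
end

section
/- The group W = (ℤ × ℤ) ⋊ ℤ/2ℤ, where the nontrivial element of ℤ/2ℤ acts on ℤ × ℤ by negation (equivalently, the group ⟨w₀, w₁, w₂ | w₀² = w₁² = w₂² = e, (w₀w₁w₂)² = e⟩), is not a Coxeter group: for every index set I and every Coxeter matrix M over I, there is no group isomorphism between the Coxeter group of M and W. In particular there is no set S of involutions in W such that (W, S) is a Coxeter system. -/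
/-!
`W` contains `ℤ × ℤ` as a torsion-free abelian subgroup of index 2, and every element outside
it is an involution. In a Coxeter system on `W` the simple reflections lie outside `ℤ × ℤ` and
their pairwise products inside it, so `s i * s j` has finite order only if `s i = s j`. If there
are three distinct simple reflections `s i, s j, s k`, then `s i * s j` and `s i * s k` commute in
`ℤ × ℤ`, yet the representation into `S₃` given by `s i ↦ (0 1)`, `s j ↦ (0 2)` and `1` on the
remaining simple reflections separates them. Otherwise `W` is generated by two involutions
`(v, σ), (w, σ)`, which lie in the proper subgroup cut out by a linear form vanishing on `v - w`.

The presented group is identified with `W` through `w₀ ↦ σ`, `w₁ ↦ (e₁, σ)`, `w₂ ↦ (e₂, σ)`;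
the inverse sends `σ, e₁, e₂` to `w₀, w₁w₀, w₂w₀`.
-/

set_option synthInstance.maxHeartbeats 400000
set_option maxHeartbeats 1000000

noncomputable section

namespace WeylPresentation

/-- Relations of `G₁ = ⟨w₀, w₁, w₂ | w₀² = w₁² = w₂² = e, (w₀w₁w₂)² = e⟩`. -/
def rels1 : Set (FreeGroup (Fin 3)) :=
  {FreeGroup.of 0 * FreeGroup.of 0, FreeGroup.of 1 * FreeGroup.of 1,
    FreeGroup.of 2 * FreeGroup.of 2,
    (FreeGroup.of 0 * FreeGroup.of 1 * FreeGroup.of 2) ^ 2}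

/-- Relations of `G₂ = ⟨s, a, b | s² = e, sas⁻¹ = a⁻¹, sbs⁻¹ = b⁻¹, ab = ba⟩`,
with `s, a, b` indexed by `0, 1, 2`. -/
def rels2 : Set (FreeGroup (Fin 3)) :=
  {FreeGroup.of 0 * FreeGroup.of 0,
    FreeGroup.of 0 * FreeGroup.of 1 * (FreeGroup.of 0)⁻¹ * FreeGroup.of 1,
    FreeGroup.of 0 * FreeGroup.of 2 * (FreeGroup.of 0)⁻¹ * FreeGroup.of 2,
    FreeGroup.of 1 * FreeGroup.of 2 * (FreeGroup.of 1)⁻¹ * (FreeGroup.of 2)⁻¹}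

/-- The negation automorphism of `ℤ × ℤ` (written multiplicatively). -/
def negAut : MulAut (Multiplicative (ℤ × ℤ)) := MulEquiv.inv (Multiplicative (ℤ × ℤ))

lemma negAut_sq : negAut * negAut = 1 := by
  ext x : 1
  show negAut (negAut x) = x
  exact inv_inv x

/-- The action of `ℤ/2ℤ` on `ℤ × ℤ` in which the nontrivial element acts by negation. -/
def negAct : Multiplicative (ZMod 2) →* MulAut (Multiplicative (ℤ × ℤ)) where
  toFun g := if Multiplicative.toAdd g = 0 then 1 else negAut
  map_one' := by simp
  map_mul' := by
    intro x y
    have hcase : ∀ z : ZMod 2, z = 0 ∨ z = 1 := by decide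
    have hx := hcase (Multiplicative.toAdd x)
    have hy := hcase (Multiplicative.toAdd y)
    have hxy : Multiplicative.toAdd (x * y)
        = Multiplicative.toAdd x + Multiplicative.toAdd y := rfl
    rcases hx with hx | hx <;> rcases hy with hy | hy <;>
      simp [hxy, hx, hy, negAut_sq] <;>
      exact fun h => absurd (by decide) h


/-- The group `W = (ℤ × ℤ) ⋊ ℤ/2ℤ`, the nontrivial element of `ℤ/2ℤ` acting by negation. -/
abbrev Wgrp : Type :=
  SemidirectProduct (Multiplicative (ℤ × ℤ)) (Multiplicative (ZMod 2)) negAct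

end WeylPresentation

section Involutions

variable {G : Type*} [Group G] {x y z : G}

lemma conj_mul_of_mul_self_eq_one (hx : x * x = 1) (hy : y * y = 1) :
    x * (y * x) * x⁻¹ = (y * x)⁻¹ := by
  rw [inv_eq_of_mul_eq_one_right hx, mul_inv_rev, inv_eq_of_mul_eq_one_right hx,
    inv_eq_of_mul_eq_one_right hy, mul_assoc, mul_assoc, hx, mul_one]

lemma commute_mul_of_mul_self_eq_one (hx : x * x = 1) (hy : y * y = 1) (hz : z * z = 1)
    (h : (x * y * z) ^ 2 = 1) : Commute (y * x) (z * x) := by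
  have hxyz : x * y * z = z * y * x := by
    rw [pow_two] at h
    rw [eq_inv_of_mul_eq_one_left h, mul_inv_rev, mul_inv_rev,
      inv_eq_of_mul_eq_one_right hx, inv_eq_of_mul_eq_one_right hy,
      inv_eq_of_mul_eq_one_right hz, mul_assoc]
  calc y * x * (z * x) = z * (z * y * x) * z * x := by
        simp only [mul_assoc, ← mul_assoc z z, hz, one_mul]
    _ = z * x * (y * x) := by
        rw [← hxyz]; simp only [mul_assoc, hz, mul_one]

end Involutions

lemma CoxeterMatrix.isLiftable_of_eq {B G : Type*} [Monoid G] {M : CoxeterMatrix B}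
    {f : B → G} (hf : ∀ i, f i * f i = 1) (hM : ∀ i j, M i j ≠ 0 → f i = f j) :
    M.IsLiftable f := by
  intro i j
  by_cases h : M i j = 0
  · rw [h, pow_zero]
  · rw [hM i j h, hf, one_pow]

namespace CoxeterSystem

variable {B W : Type*} [Group W] {M : CoxeterMatrix B} (cs : CoxeterSystem M W)

lemma simple_ne_one (i : B) : cs.simple i ≠ 1 := fun h => by
  simpa [h] using cs.length_simple i

open scoped Classical in
lemma not_commute_simple_mul_simple (hM : ∀ i j, M i j ≠ 0 → cs.simple i = cs.simple j)
    {i j k : B} (hij : cs.simple i ≠ cs.simple j) (hik : cs.simple i ≠ cs.simple k)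
    (hjk : cs.simple j ≠ cs.simple k) :
    ¬ Commute (cs.simple i * cs.simple j) (cs.simple i * cs.simple k) := by
  let f : B → Equiv.Perm (Fin 3) := fun a =>
    if cs.simple a = cs.simple i then Equiv.swap 0 1
    else if cs.simple a = cs.simple j then Equiv.swap 0 2 else 1
  have hf : M.IsLiftable f := CoxeterMatrix.isLiftable_of_eq
    (fun a => by dsimp only [f]; split_ifs <;> simp)
    (fun a b hab => by simp only [f, hM a b hab])
  intro hcomm
  have h := (hcomm.map (cs.lift ⟨f, hf⟩)).eq
  simp only [map_mul, cs.lift_apply_simple, f, if_pos, if_neg hij.symm, if_neg hik.symm,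
    if_neg hjk.symm] at h
  exact absurd h (by decide)

end CoxeterSystem

lemma exists_range_subset_pair {I α : Type*} {S : Set α} (hS : S.Nonempty) {f : I → α}
    (hf : ∀ i, f i ∈ S) (h : ∀ i j k, f i ≠ f j → f i ≠ f k → f j = f k) :
    ∃ x ∈ S, ∃ y ∈ S, Set.range f ⊆ {x, y} := by
  rcases isEmpty_or_nonempty I with hI | ⟨⟨i⟩⟩
  · obtain ⟨x, hx⟩ := hS
    exact ⟨x, hx, x, hx, by simp [Set.range_eq_empty]⟩
  by_cases hj : ∃ j, f i ≠ f j
  · obtain ⟨j, hij⟩ := hj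
    refine ⟨f i, hf i, f j, hf j, ?_⟩
    rintro _ ⟨k, rfl⟩
    by_cases hik : f i = f k
    · exact Or.inl hik.symm
    · exact Or.inr (h i j k hij hik).symm
  · refine ⟨f i, hf i, f i, hf i, ?_⟩
    rintro _ ⟨k, rfl⟩
    simpa using (not_not.mp (not_exists.mp hj k)).symm

lemma exists_apply_eq_zero_ne_zero (d : ℤ × ℤ) : ∃ L : ℤ × ℤ →+ ℤ, L d = 0 ∧ L ≠ 0 := by
  by_cases hd : d = 0
  · refine ⟨AddMonoidHom.fst ℤ ℤ, by simp [hd], fun h => ?_⟩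
    simpa using DFunLike.congr_fun h (1, 0)
  · refine ⟨d.2 • AddMonoidHom.fst ℤ ℤ - d.1 • AddMonoidHom.snd ℤ ℤ, by simp [mul_comm],
      fun h => hd ?_⟩
    have h₁ := DFunLike.congr_fun h (1, 0)
    have h₂ := DFunLike.congr_fun h (0, 1)
    simp only [AddMonoidHom.sub_apply, AddMonoidHom.smul_apply, AddMonoidHom.coe_fst,
      AddMonoidHom.coe_snd, AddMonoidHom.zero_apply, smul_eq_mul] at h₁ h₂
    ext <;> simp_all

namespace WeylPresentation

open SemidirectProduct Multiplicative

lemma negAct_apply (g : Multiplicative (ZMod 2)) (n : Multiplicative (ℤ × ℤ)) :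
    negAct g n = if g = 1 then n else n⁻¹ := by
  change (if toAdd g = 0 then (1 : MulAut _) else negAut) n = _
  simp only [toAdd_eq_zero]
  split <;> rfl

lemma eq_ofAdd_one_of_ne_one {g : Multiplicative (ZMod 2)} (hg : g ≠ 1) : g = ofAdd 1 := by
  revert g; decide

lemma mul_eq_one_of_ne_one {g h : Multiplicative (ZMod 2)} (hg : g ≠ 1) (hh : h ≠ 1) :
    g * h = 1 := by
  revert g h; decide

namespace Wgrp

lemma mul_self_eq_one {x : Wgrp} (hx : x.right ≠ 1) : x * x = 1 := by
  ext : 1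
  · simp [mul_left, negAct_apply, hx]
  · exact mul_eq_one_of_ne_one hx hx

lemma right_mul_eq_one {x y : Wgrp} (hx : x.right ≠ 1) (hy : y.right ≠ 1) :
    (x * y).right = 1 :=
  mul_eq_one_of_ne_one hx hy

lemma commute_of_right_eq_one {x y : Wgrp} (hx : x.right = 1) (hy : y.right = 1) :
    Commute x y := by
  ext : 1
  · simp [mul_left, hx, hy, mul_comm]
  · simp [mul_right, hx, hy]

lemma eq_one_of_pow_eq_one {x : Wgrp} (hx : x.right = 1) {n : ℕ} (hn : n ≠ 0)
    (h : x ^ n = 1) : x = 1 := by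
  obtain ⟨u, rfl⟩ : ∃ u, inl u = x := ⟨x.left, by ext <;> simp [hx]⟩
  have hu : n • toAdd u = 0 := by
    rw [← toAdd_pow, toAdd_eq_zero, ← inl_injective.eq_iff (f := inl (φ := negAct)),
      map_pow, h, map_one]
  rw [smul_eq_zero_iff_right hn, toAdd_eq_zero] at hu
  rw [hu, map_one]

def levelSubgroup (L : ℤ × ℤ →+ ℤ) (c : ℤ) : Subgroup Wgrp where
  carrier := {x | L (toAdd x.left) = if x.right = 1 then 0 else c}
  one_mem' := by simp
  mul_mem' {x y} hx hy := by
    simp only [Set.mem_ofPred_eq, mul_left, mul_right, negAct_apply] at hx hy ⊢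
    by_cases hx1 : x.right = 1 <;> by_cases hy1 : y.right = 1 <;>
      simp_all [mul_eq_one_of_ne_one]
  inv_mem' {x} hx := by
    simp only [Set.mem_ofPred_eq, inv_left, inv_right, negAct_apply] at hx ⊢
    by_cases hx1 : x.right = 1 <;> simp_all

lemma mem_levelSubgroup {L : ℤ × ℤ →+ ℤ} {c : ℤ} {x : Wgrp} :
    x ∈ levelSubgroup L c ↔ L (toAdd x.left) = if x.right = 1 then 0 else c :=
  Iff.rfl

lemma closure_pair_ne_top {x y : Wgrp} (hx : x.right ≠ 1) (hy : y.right ≠ 1) :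
    Subgroup.closure {x, y} ≠ ⊤ := by
  obtain ⟨L, hL, hL0⟩ := exists_apply_eq_zero_ne_zero (toAdd x.left - toAdd y.left)
  obtain ⟨u, hu⟩ := DFunLike.ne_iff.mp hL0
  have hle : Subgroup.closure {x, y} ≤ levelSubgroup L (L (toAdd x.left)) := by
    rw [Subgroup.closure_le, Set.insert_subset_iff, Set.singleton_subset_iff]
    simp only [SetLike.mem_coe, mem_levelSubgroup, if_neg hx, if_neg hy]
    exact ⟨trivial, (sub_eq_zero.mp (by rwa [← map_sub])).symm⟩
  intro htop
  have hu' := mem_levelSubgroup.mp (hle (htop ▸ Subgroup.mem_top (inl (ofAdd u))))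
  simp_all

section CoxeterSystem

variable {B : Type*} {M : CoxeterMatrix B} (cs : CoxeterSystem M Wgrp)

lemma right_simple_ne_one (i : B) : (cs.simple i).right ≠ 1 := fun h =>
  cs.simple_ne_one i (eq_one_of_pow_eq_one h two_ne_zero (cs.simple_sq i))

lemma simple_eq_of_ne_zero {i j : B} (hij : M i j ≠ 0) : cs.simple i = cs.simple j := by
  have hprod : cs.simple i * cs.simple j = 1 := eq_one_of_pow_eq_one
    (right_mul_eq_one (right_simple_ne_one cs i) (right_simple_ne_one cs j)) hij
    (cs.simple_mul_simple_pow i j)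
  simpa using eq_inv_of_mul_eq_one_left hprod

lemma isEmpty_coxeterSystem : IsEmpty (CoxeterSystem M Wgrp) := by
  refine ⟨fun cs => ?_⟩
  have hs := right_simple_ne_one cs
  by_cases h3 : ∃ i j k, cs.simple i ≠ cs.simple j ∧ cs.simple i ≠ cs.simple k ∧
      cs.simple j ≠ cs.simple k
  · obtain ⟨i, j, k, hij, hik, hjk⟩ := h3
    exact cs.not_commute_simple_mul_simple (fun _ _ => simple_eq_of_ne_zero cs) hij hik hjk
      (commute_of_right_eq_one (right_mul_eq_one (hs i) (hs j))
        (right_mul_eq_one (hs i) (hs k)))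
  · obtain ⟨x, hx, y, hy, hxy⟩ := exists_range_subset_pair (S := {x : Wgrp | x.right ≠ 1})
      ⟨inr (ofAdd 1), by decide⟩ hs
      (fun i j k hij hik => by_contra fun hjk => h3 ⟨i, j, k, hij, hik, hjk⟩)
    exact closure_pair_ne_top hx hy
      (top_le_iff.mp (cs.subgroup_closure_range_simple ▸ Subgroup.closure_mono hxy))

end CoxeterSystem

section Lift

variable {G : Type*} [Group G] {s a b : G}

def liftLeft (hab : Commute a b) : Multiplicative (ℤ × ℤ) →* G where
  toFun u := a ^ (toAdd u).1 * b ^ (toAdd u).2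
  map_one' := by simp
  map_mul' u v := by
    simp only [toAdd_mul, Prod.fst_add, Prod.snd_add, zpow_add, mul_assoc]
    rw [(hab.zpow_zpow _ _).left_comm]

def liftRight (hs : s * s = 1) : Multiplicative (ZMod 2) →* G where
  toFun g := if g = 1 then 1 else s
  map_one' := if_pos rfl
  map_mul' g h := by
    by_cases hg : g = 1 <;> by_cases hh : h = 1 <;> simp [hg, hh, mul_eq_one_of_ne_one, hs]

variable (hs : s * s = 1) (hab : Commute a b) (ha : s * a * s⁻¹ = a⁻¹) (hb : s * b * s⁻¹ = b⁻¹)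

include ha hb in
lemma conj_liftLeft (u : Multiplicative (ℤ × ℤ)) :
    s * liftLeft hab u * s⁻¹ = liftLeft hab u⁻¹ := by
  change MulAut.conj s (a ^ (toAdd u).1 * b ^ (toAdd u).2) =
    a ^ (toAdd u⁻¹).1 * b ^ (toAdd u⁻¹).2
  rw [map_mul, map_zpow, map_zpow, MulAut.conj_apply, MulAut.conj_apply, ha, hb]
  simp

def lift : Wgrp →* G :=
  SemidirectProduct.lift (liftLeft hab) (liftRight hs) fun g => by
    ext u
    by_cases hg : g = 1
    · simp [hg, liftRight]
    · simp [negAct_apply, hg, liftRight, conj_liftLeft hab ha hb]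

lemma lift_inl (u : Multiplicative (ℤ × ℤ)) :
    lift hs hab ha hb (inl u) = a ^ (toAdd u).1 * b ^ (toAdd u).2 :=
  SemidirectProduct.lift_inl _ _ _ _

lemma lift_inr_ofAdd_one : lift hs hab ha hb (inr (ofAdd 1)) = s := by
  simp [lift, liftRight]

end Lift

lemma hom_ext {G : Type*} [Group G] {f g : Wgrp →* G}
    (h₁ : f (inl (ofAdd (1, 0))) = g (inl (ofAdd (1, 0))))
    (h₂ : f (inl (ofAdd (0, 1))) = g (inl (ofAdd (0, 1))))
    (hσ : f (inr (ofAdd 1)) = g (inr (ofAdd 1))) : f = g := by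
  refine SemidirectProduct.hom_ext (MonoidHom.ext fun u => ?_) (MonoidHom.ext fun h => ?_)
  · have hu : u = ofAdd (1, 0) ^ (toAdd u).1 * ofAdd (0, 1) ^ (toAdd u).2 := by
      apply toAdd.injective; ext <;> simp
    rw [hu]
    simp [h₁, h₂]
  · by_cases h1 : h = 1
    · simp [h1]
    · simp [eq_ofAdd_one_of_ne_one h1, hσ]

lemma inr_ofAdd_one_mul_self : (inr (ofAdd 1) * inr (ofAdd 1) : Wgrp) = 1 :=
  mul_self_eq_one (by decide)

end Wgrp

section Presentation

local notation "w" i => (PresentedGroup.of i : PresentedGroup rels1)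

lemma of_mul_self (i : Fin 3) : (w i) * (w i) = 1 := by
  have h := PresentedGroup.one_of_mem (rels := rels1) (x := FreeGroup.of i * FreeGroup.of i)
    (by fin_cases i <;> simp [rels1])
  rwa [map_mul] at h

lemma of_mul_of_mul_of_sq : ((w 0) * (w 1) * (w 2)) ^ 2 = 1 := by
  have h := PresentedGroup.one_of_mem (rels := rels1)
    (x := (FreeGroup.of 0 * FreeGroup.of 1 * FreeGroup.of 2) ^ 2) (by simp [rels1])
  rwa [map_pow, map_mul, map_mul] at h

def generatorImage : Fin 3 → Wgrp :=
  ![inr (ofAdd 1), inl (ofAdd (1, 0)) * inr (ofAdd 1), inl (ofAdd (0, 1)) * inr (ofAdd 1)]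

lemma right_generatorImage (i : Fin 3) : (generatorImage i).right = ofAdd 1 := by
  fin_cases i <;> rfl

def presentedToW : PresentedGroup rels1 →* Wgrp :=
  PresentedGroup.toGroup (f := generatorImage) <| by
    rintro r (rfl | rfl | rfl | rfl) <;>
      simp only [map_mul, FreeGroup.lift_apply_of, pow_two] <;>
      exact Wgrp.mul_self_eq_one (by simp only [mul_right, right_generatorImage]; decide)

def wToPresented : Wgrp →* PresentedGroup rels1 :=
  Wgrp.lift (of_mul_self 0)
    (commute_mul_of_mul_self_eq_one (of_mul_self 0) (of_mul_self 1) (of_mul_self 2)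
      of_mul_of_mul_of_sq)
    (conj_mul_of_mul_self_eq_one (of_mul_self 0) (of_mul_self 1))
    (conj_mul_of_mul_self_eq_one (of_mul_self 0) (of_mul_self 2))

lemma presentedToW_of (i : Fin 3) : presentedToW (w i) = generatorImage i :=
  PresentedGroup.toGroup.of _

lemma wToPresented_inl (m n : ℤ) :
    wToPresented (inl (ofAdd (m, n))) = ((w 1) * (w 0)) ^ m * ((w 2) * (w 0)) ^ n :=
  Wgrp.lift_inl ..

lemma wToPresented_inr : wToPresented (inr (ofAdd 1)) = w 0 :=
  Wgrp.lift_inr_ofAdd_one ..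

def presentedEquiv : PresentedGroup rels1 ≃* Wgrp :=
  presentedToW.toMulEquiv wToPresented
    (PresentedGroup.ext fun i => by
      fin_cases i <;>
        simp [presentedToW_of, generatorImage, wToPresented_inl, wToPresented_inr, mul_assoc,
          of_mul_self])
    (Wgrp.hom_ext
      (by simp [wToPresented_inl, presentedToW_of, generatorImage, mul_assoc,
        Wgrp.inr_ofAdd_one_mul_self])
      (by simp [wToPresented_inl, presentedToW_of, generatorImage, mul_assoc,
        Wgrp.inr_ofAdd_one_mul_self])
      (by simp [wToPresented_inr, presentedToW_of, generatorImage]))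

end Presentation

/-- The group `W = (ℤ × ℤ) ⋊ ℤ/2ℤ` (with the nontrivial element of
`ℤ/2ℤ` acting by negation), i.e. the group
`⟨w₀, w₁, w₂ | w₀² = w₁² = w₂² = e, (w₀w₁w₂)² = e⟩`, is not a Coxeter group: for every
index set `I` and every Coxeter matrix `M` over `I`, there is no group isomorphism
between the Coxeter group of `M` and `W`; in particular `W` carries no Coxeter system. -/
theorem W_not_coxeter :
    (∀ (I : Type) (M : CoxeterMatrix I), IsEmpty (M.Group ≃* Wgrp)) ∧
    (∀ (I : Type) (M : CoxeterMatrix I), IsEmpty (CoxeterSystem M Wgrp)) ∧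
    (∀ (I : Type) (M : CoxeterMatrix I), IsEmpty (M.Group ≃* PresentedGroup rels1)) :=
  ⟨fun _ _ => ⟨fun e => Wgrp.isEmpty_coxeterSystem.false ⟨e.symm⟩⟩,
    fun _ _ => Wgrp.isEmpty_coxeterSystem,
    fun _ _ => ⟨fun e => Wgrp.isEmpty_coxeterSystem.false ⟨(e.trans presentedEquiv).symm⟩⟩⟩

end WeylPresentation
end
end
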